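/- arXiv:2308.06128 — 4 statements merged into one kernel-verified Lean document; each statement's English description precedes it below -/
import Mathlib

section
/- Let N, l₁, l₂, m₁, m₂ be real numbers with N > l₁ > 1, l₂ > 1, m₁ > 0, m₂ > 0, let l₁* := l₁N/(N−l₁), and let r be a real number with max{1/l₁, 1/l₂} < r < min{l₁/m₁, l₂/m₂}. Assume l₁*·m₁·(l₁+1) − l₁²·(l₁* + m₁) ≥ 0, and set q := l₁/(l₁(1−r)+1). Then l₁*/(q·l₁) > 1. -/
/-!
Writing `D = l₁(1 - r) + 1`, the ratio is `l₁* D / l₁²`, so the claim is `l₁² < l₁* D`.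
Multiplied by `m₁`, the difference `l₁* D - l₁²` is the hypothesis quantity plus
`l₁* l₁ (l₁ - r m₁)`, which is positive because `r < l₁ / m₁`.
-/

theorem sq_lt_mul_one_sub_mul_add_one {L S m r : ℝ} (hL : 0 < L) (hS : 0 < S) (hm : 0 < m)
    (hr : r < L / m) (h : 0 ≤ S * m * (L + 1) - L ^ 2 * (S + m)) :
    L ^ 2 < S * (L * (1 - r) + 1) := by
  have hrm : r * m < L := (lt_div_iff₀ hm).mp hr
  have hgap : 0 < S * L * (L - r * m) := by positivity [sub_pos.mpr hrm]
  have hscaled : L ^ 2 * m < S * (L * (1 - r) + 1) * m := by nlinarith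
  exact lt_of_mul_lt_mul_right hscaled hm.le

theorem stmt_1_general (N l₁ l₂ m₁ m₂ r l₁s q : ℝ)
    (hN : l₁ < N) (hl₁ : 1 < l₁) (hm₁ : 0 < m₁)
    (hl₁s : l₁s = l₁ * N / (N - l₁))
    (hr₂ : r < min (l₁ / m₁) (l₂ / m₂))
    (hcond : 0 ≤ l₁s * m₁ * (l₁ + 1) - l₁ ^ 2 * (l₁s + m₁))
    (hq : q = l₁ / (l₁ * (1 - r) + 1)) :
    1 < l₁s / (q * l₁) := by
  have hl₁0 : 0 < l₁ := by linarith
  have hl₁s0 : 0 < l₁s := hl₁s ▸ div_pos (mul_pos hl₁0 (by linarith)) (sub_pos.mpr hN)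
  have hr : r < l₁ / m₁ := hr₂.trans_le (min_le_left _ _)
  rw [hq, div_mul_eq_mul_div, div_div_eq_mul_div, one_lt_div (by positivity), ← sq]
  exact sq_lt_mul_one_sub_mul_add_one hl₁0 hl₁s0 hm₁ hr hcond

/-- Lemma 6.2: the iteration ratio `l₁*/(q l₁)` exceeds 1. -/
theorem stmt_1 (N l₁ l₂ m₁ m₂ r l₁s q : ℝ)
    (hN : l₁ < N) (hl₁ : 1 < l₁) (hl₂ : 1 < l₂) (hm₁ : 0 < m₁) (hm₂ : 0 < m₂)
    (hl₁s : l₁s = l₁ * N / (N - l₁))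
    (hr₁ : max (1 / l₁) (1 / l₂) < r) (hr₂ : r < min (l₁ / m₁) (l₂ / m₂))
    (hcond : 0 ≤ l₁s * m₁ * (l₁ + 1) - l₁ ^ 2 * (l₁s + m₁))
    (hq : q = l₁ / (l₁ * (1 - r) + 1)) :
    1 < l₁s / (q * l₁) :=
  stmt_1_general N l₁ l₂ m₁ m₂ r l₁s q hN hl₁ hm₁ hl₁s hr₂ hcond hq
end

section
/- Let a, l₁, ν₀ be real numbers with a > 1, l₁ > 1, ν₀ > 0 and ν₀ + 1 = a·l₁, and define ν_k := ((a^{k+1} − 1)/(a − 1))·ν₀ for integers k ≥ 0 (equivalently, ν_k = a·ν_{k−1} + ν₀). Let β_k := ∏_{i=0}^{k} (1 + ν_i)/(ν_i + l₁). Then the sequence (β_k) converges as k → ∞ to a limit β satisfying 0 < β < 1. -/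
/-!
From `ν (k + 1) = a * ν k + ν₀` and `ν₀ + 1 = a * l₁` we get `1 + ν (k + 1) = a * (ν k + l₁)`,
so the product telescopes to `β_k = a ^ k * (1 + ν₀) / (ν k + l₁)`. Since `ν k / a ^ k` tends to
`a * ν₀ / (a - 1)`, the limit is `β = (1 + ν₀) * (a - 1) / (a * ν₀)`, and `β < 1` amounts to
`a - 1 < ν₀`, i.e. to `l₁ > 1`.
-/

open Filter Finset Topology

theorem Finset.prod_range_succ_div_eq_of_succ_eq_mul {K : Type*} [Field K] {f g : ℕ → K} {a : K}
    (hg : ∀ k, g k ≠ 0) (hfg : ∀ k, f (k + 1) = a * g k) (k : ℕ) :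
    ∏ i ∈ range (k + 1), f i / g i = a ^ k * f 0 / g k := by
  induction k with
  | zero => simp
  | succ k ih =>
    rw [prod_range_succ, ih, hfg k]
    field_simp [hg k, hg (k + 1)]
    ring

section GeomMulSeq

variable {a ν₀ : ℝ} {ν : ℕ → ℝ} (hν : ∀ k : ℕ, ν k = ((a ^ (k + 1) - 1) / (a - 1)) * ν₀)
include hν

theorem geomMulSeq_zero (ha : a ≠ 1) : ν 0 = ν₀ := by
  rw [hν, zero_add, pow_one, div_self (sub_ne_zero.2 ha), one_mul]

theorem geomMulSeq_succ (ha : a ≠ 1) (k : ℕ) : ν (k + 1) = a * ν k + ν₀ := by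
  rw [hν, hν]
  field_simp [sub_ne_zero.2 ha]
  ring

theorem geomMulSeq_pos (ha : 1 < a) (hν₀ : 0 < ν₀) (k : ℕ) : 0 < ν k := by
  have hpow : 0 < a ^ (k + 1) - 1 := sub_pos.2 (one_lt_pow₀ ha k.succ_ne_zero)
  have ha1 : 0 < a - 1 := sub_pos.2 ha
  rw [hν]
  positivity

theorem tendsto_geomMulSeq_div_pow (ha : 1 < a) :
    Tendsto (fun k => ν k / a ^ k) atTop (𝓝 (a * ν₀ / (a - 1))) := by
  have ha0 : 0 < a := one_pos.trans ha
  have hinv : Tendsto (fun k : ℕ => a⁻¹ ^ k) atTop (𝓝 0) :=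
    tendsto_pow_atTop_nhds_zero_of_lt_one (inv_nonneg.2 ha0.le) (inv_lt_one_of_one_lt₀ ha)
  have hform : ∀ k, ν k / a ^ k = (a - a⁻¹ ^ k) / (a - 1) * ν₀ := fun k => by
    rw [hν, inv_pow]
    field_simp [sub_ne_zero.2 ha.ne']
    ring
  simp only [hform]
  have hlim := ((hinv.const_sub a).div_const (a - 1)).mul_const ν₀
  rwa [sub_zero, div_mul_eq_mul_div] at hlim

end GeomMulSeq

/-- Lemma 6.4: the product `β_k` converges to a limit `β` with `0 < β < 1`. -/
theorem stmt_3 (a l₁ ν₀ : ℝ)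
    (ha : 1 < a) (hl₁ : 1 < l₁) (hν₀ : 0 < ν₀) (hrel : ν₀ + 1 = a * l₁)
    (ν : ℕ → ℝ)
    (hν : ∀ k : ℕ, ν k = ((a ^ (k + 1) - 1) / (a - 1)) * ν₀) :
    ∃ β : ℝ, 0 < β ∧ β < 1 ∧
      Filter.Tendsto (fun k : ℕ => ∏ i ∈ Finset.range (k + 1), (1 + ν i) / (ν i + l₁))
        Filter.atTop (nhds β) := by
  have ha1 : 0 < a - 1 := sub_pos.2 ha
  have hden : ∀ k, 0 < ν k + l₁ := fun k => by linarith [geomMulSeq_pos hν ha hν₀ k]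
  have hstep : ∀ k, 1 + ν (k + 1) = a * (ν k + l₁) := fun k => by
    rw [geomMulSeq_succ hν ha.ne' k]
    linarith
  have hL : 0 < a * ν₀ / (a - 1) := by positivity
  refine ⟨(1 + ν₀) / (a * ν₀ / (a - 1)), by positivity, ?_, ?_⟩
  · rw [div_lt_one hL, lt_div_iff₀ ha1]
    nlinarith
  · have hlim : Tendsto (fun k => (ν k + l₁) / a ^ k) atTop (𝓝 (a * ν₀ / (a - 1))) := by
      have hl₁lim : Tendsto (fun k : ℕ => l₁ / a ^ k) atTop (𝓝 0) :=
        tendsto_const_nhds.div_atTop (tendsto_pow_atTop_atTop_of_one_lt ha)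
      simpa only [add_div, add_zero] using (tendsto_geomMulSeq_div_pow hν ha).add hl₁lim
    refine (tendsto_const_nhds.div hlim hL.ne').congr fun k => ?_
    rw [Pi.div_apply, prod_range_succ_div_eq_of_succ_eq_mul (fun k => (hden k).ne') hstep k,
      geomMulSeq_zero hν ha.ne']
    field_simp
end

section
/- Let N ≥ 1, δ > 0, l₁ > 0, l₂ > 0 and α > 0. Let F : ℝ^N × ℝ × ℝ → ℝ be such that (u,v) ↦ F(x,u,v) is continuously differentiable for each x and F(x,u,v) ≥ 0 whenever u² + v² < δ², and let a₁, a₂ : ℝ^N → [0,∞) satisfy ∂_u F(x,u,v)·u + ∂_v F(x,u,v)·v − α·F(x,u,v) ≤ a₁(x)|u|^{l₁} + a₂(x)|v|^{l₂} whenever u² + v² < δ². Let ρ : ℝ² → [0,1] be a C¹ function with ρ(u,v) = 1 when u² + v² ≤ δ²/4, ρ(u,v) = 0 when u² + v² ≥ δ², and u·ρ_u(u,v) + v·ρ_v(u,v) ≤ 0 for all (u,v) ∈ ℝ². Set F̃(x,u,v) := ρ(u,v)·F(x,u,v). Then for ALL (x,u,v) ∈ ℝ^N × ℝ × ℝ: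 ∂_u F̃(x,u,v)·u + ∂_v F̃(x,u,v)·v − α·F̃(x,u,v) ≤ a₁(x)|u|^{l₁} + a₂(x)|v|^{l₂}. -/
/-!
Since `∂_u(ρF)·u + ∂_v(ρF)·v − α ρF = (u ρ_u + v ρ_v) F + ρ (∂_u F·u + ∂_v F·v − α F)`,
inside the disc the first term is `≤ 0` (sign condition on `ρ`, `F ≥ 0`) and the second is at
most `max (∂_u F·u + ∂_v F·v − α F) 0` because `0 ≤ ρ ≤ 1`. Outside the disc `ρ` vanishes, and
being nonnegative it has a minimum there, so its partial derivatives vanish too and the left-hand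
side is `0`.
-/

theorem deriv_eq_zero_of_nonneg_of_eq_zero {g : ℝ → ℝ} {x : ℝ} (hg : ∀ t, 0 ≤ g t)
    (hx : g x = 0) : deriv g x = 0 :=
  IsLocalMin.deriv_eq_zero (Filter.Eventually.of_forall fun t => hx ▸ hg t)

theorem cutoff_euler_le {r ρu ρv f fu fv u v α B : ℝ} (hf : 0 ≤ f) (hr : r ∈ Set.Icc (0 : ℝ) 1)
    (hsign : u * ρu + v * ρv ≤ 0) (hB : 0 ≤ B) (hAR : fu * u + fv * v - α * f ≤ B) :
    (ρu * f + r * fu) * u + (ρv * f + r * fv) * v - α * (r * f) ≤ B := by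
  have hρ : (u * ρu + v * ρv) * f ≤ 0 := mul_nonpos_of_nonpos_of_nonneg hsign hf
  have hF : r * (fu * u + fv * v - α * f) ≤ B := by
    rcases le_total (fu * u + fv * v - α * f) 0 with hE | hE
    · exact (mul_nonpos_of_nonneg_of_nonpos hr.1 hE).trans hB
    · exact (mul_le_of_le_one_left hE hr.2).trans hAR
  linarith

theorem stmt_7_general (N : ℕ) (δ l₁ l₂ α : ℝ)
    (F : (Fin N → ℝ) → ℝ → ℝ → ℝ)
    (hF : ∀ x, ContDiff ℝ 1 (fun p : ℝ × ℝ => F x p.1 p.2))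
    (hFnn : ∀ x (u v : ℝ), u ^ 2 + v ^ 2 < δ ^ 2 → 0 ≤ F x u v)
    (a₁ a₂ : (Fin N → ℝ) → ℝ) (ha₁ : ∀ x, 0 ≤ a₁ x) (ha₂ : ∀ x, 0 ≤ a₂ x)
    (hAR : ∀ x (u v : ℝ), u ^ 2 + v ^ 2 < δ ^ 2 →
      deriv (fun u' => F x u' v) u * u + deriv (fun v' => F x u v') v * v
        - α * F x u v ≤ a₁ x * |u| ^ l₁ + a₂ x * |v| ^ l₂)
    (ρ : ℝ × ℝ → ℝ) (hρ : ContDiff ℝ 1 ρ)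
    (hρ01 : ∀ p, ρ p ∈ Set.Icc (0 : ℝ) 1)
    (hρ0 : ∀ p : ℝ × ℝ, δ ^ 2 ≤ p.1 ^ 2 + p.2 ^ 2 → ρ p = 0)
    (hρsign : ∀ u v : ℝ,
      u * deriv (fun u' => ρ (u', v)) u + v * deriv (fun v' => ρ (u, v')) v ≤ 0) :
    ∀ x (u v : ℝ),
      deriv (fun u' => ρ (u', v) * F x u' v) u * u
        + deriv (fun v' => ρ (u, v') * F x u v') v * v
        - α * (ρ (u, v) * F x u v) ≤ a₁ x * |u| ^ l₁ + a₂ x * |v| ^ l₂ := by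
  intro x u v
  have hRHS : 0 ≤ a₁ x * |u| ^ l₁ + a₂ x * |v| ^ l₂ := by
    have := ha₁ x; have := ha₂ x; positivity
  have hρd : Differentiable ℝ ρ := hρ.differentiable one_ne_zero
  have hFd : Differentiable ℝ (fun p : ℝ × ℝ => F x p.1 p.2) := (hF x).differentiable one_ne_zero
  have hFu : DifferentiableAt ℝ (fun u' => F x u' v) u :=
    (hFd.comp (differentiable_id.prodMk (differentiable_const v))).differentiableAt
  have hFv : DifferentiableAt ℝ (fun v' => F x u v') v :=
    (hFd.comp ((differentiable_const u).prodMk differentiable_id)).differentiableAt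
  have hρu : DifferentiableAt ℝ (fun u' => ρ (u', v)) u := by fun_prop
  have hρv : DifferentiableAt ℝ (fun v' => ρ (u, v')) v := by fun_prop
  rw [deriv_fun_mul hρu hFu, deriv_fun_mul hρv hFv]
  rcases lt_or_ge (u ^ 2 + v ^ 2) (δ ^ 2) with hin | hout
  · exact cutoff_euler_le (hFnn x u v hin) (hρ01 _) (hρsign u v) hRHS (hAR x u v hin)
  · have hρuv : ρ (u, v) = 0 := hρ0 (u, v) hout
    rw [hρuv, deriv_eq_zero_of_nonneg_of_eq_zero (fun t => (hρ01 (t, v)).1) hρuv,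
      deriv_eq_zero_of_nonneg_of_eq_zero (fun t => (hρ01 (u, t)).1) hρuv]
    simpa using hRHS

/-- Condition (F₂′) of Lemma 3.1: the cut-off modification `F̃ = ρ F` satisfies
the Ambrosetti–Rabinowitz-type inequality (F₂) globally. -/
theorem stmt_7 (N : ℕ) (hN : 1 ≤ N) (δ l₁ l₂ α : ℝ)
    (hδ : 0 < δ) (hl₁ : 0 < l₁) (hl₂ : 0 < l₂) (hα : 0 < α)
    (F : (Fin N → ℝ) → ℝ → ℝ → ℝ)
    (hF : ∀ x, ContDiff ℝ 1 (fun p : ℝ × ℝ => F x p.1 p.2))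
    (hFnn : ∀ x (u v : ℝ), u ^ 2 + v ^ 2 < δ ^ 2 → 0 ≤ F x u v)
    (a₁ a₂ : (Fin N → ℝ) → ℝ) (ha₁ : ∀ x, 0 ≤ a₁ x) (ha₂ : ∀ x, 0 ≤ a₂ x)
    (hAR : ∀ x (u v : ℝ), u ^ 2 + v ^ 2 < δ ^ 2 →
      deriv (fun u' => F x u' v) u * u + deriv (fun v' => F x u v') v * v
        - α * F x u v ≤ a₁ x * |u| ^ l₁ + a₂ x * |v| ^ l₂)
    (ρ : ℝ × ℝ → ℝ) (hρ : ContDiff ℝ 1 ρ)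
    (hρ01 : ∀ p, ρ p ∈ Set.Icc (0 : ℝ) 1)
    (hρ1 : ∀ p : ℝ × ℝ, p.1 ^ 2 + p.2 ^ 2 ≤ δ ^ 2 / 4 → ρ p = 1)
    (hρ0 : ∀ p : ℝ × ℝ, δ ^ 2 ≤ p.1 ^ 2 + p.2 ^ 2 → ρ p = 0)
    (hρsign : ∀ u v : ℝ,
      u * deriv (fun u' => ρ (u', v)) u + v * deriv (fun v' => ρ (u, v')) v ≤ 0) :
    ∀ x (u v : ℝ),
      deriv (fun u' => ρ (u', v) * F x u' v) u * u
        + deriv (fun v' => ρ (u, v') * F x u v') v * v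
        - α * (ρ (u, v) * F x u v) ≤ a₁ x * |u| ^ l₁ + a₂ x * |v| ^ l₂ :=
  stmt_7_general N δ l₁ l₂ α F hF hFnn a₁ a₂ ha₁ ha₂ hAR ρ hρ hρ01 hρ0 hρsign
end

section
/- Let N ≥ 1, δ > 0 and p > 1. Let k ∈ L¹(ℝ^N) ∩ L^∞(ℝ^N), and let g : ℝ² → ℝ be continuous with g(u,v) = 0 whenever u² + v² ≥ δ². Let (u_n), (v_n) be sequences of measurable functions on ℝ^N and u, v measurable functions such that u_n → u almost everywhere, v_n → v almost everywhere, u ∈ L^p(ℝ^N), and sup_n ‖u_n‖_{L^p(ℝ^N)} < ∞. Then ∫_{ℝ^N} |k(x)|·|g(u_n(x),v_n(x)) − g(u(x),v(x))|·|u_n(x) − u(x)| dx → 0 as n → ∞. -/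
/-!
Write the integrand as `|w_n| * |u_n - u|` with `w_n = k * (g(u_n, v_n) - g(u, v))`. Since `g` is
continuous with compact support it is bounded, so `|w_n| ≤ 2 M |k|`, and `k ∈ L¹ ∩ L^∞ ⊆ L^q` for
the conjugate exponent `q` of `p`; dominated convergence then gives `w_n → 0` in `L^q`. Hölder's
inequality bounds the integral by `‖w_n‖_q * ‖u_n - u‖_p`, and the second factor stays bounded.
-/

open MeasureTheory Filter
open scoped ENNReal Topology

lemma hasCompactSupport_of_le_sq_add_sq {β : Type*} [Zero β] {g : ℝ × ℝ → β} {δ : ℝ}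
    (h : ∀ u v : ℝ, δ ^ 2 ≤ u ^ 2 + v ^ 2 → g (u, v) = 0) : HasCompactSupport g := by
  refine HasCompactSupport.intro (isCompact_closedBall (0 : ℝ × ℝ) |δ|) fun a ha => h a.1 a.2 ?_
  rw [Metric.mem_closedBall, dist_zero_right, not_le, Prod.norm_def, lt_max_iff,
    Real.norm_eq_abs, Real.norm_eq_abs] at ha
  rcases ha with h_fst | h_snd
  · nlinarith [sq_abs δ, sq_abs a.1, abs_nonneg δ, sq_nonneg a.2]
  · nlinarith [sq_abs δ, sq_abs a.2, abs_nonneg δ, sq_nonneg a.1]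

section Lp

variable {α E : Type*} [MeasurableSpace α] {μ : Measure α} [NormedAddCommGroup E]

lemma MeasureTheory.Integrable.memLp_of_memLp_top {f : α → E} (hf : Integrable f μ)
    (htop : MemLp f ∞ μ) {q : ℝ≥0∞} (hq : 1 ≤ q) : MemLp f q μ := by
  rcases eq_or_ne q ∞ with rfl | hq_top
  · exact htop
  have hq0 : q ≠ 0 := (zero_lt_one.trans_le hq).ne'
  have hq1 : 1 ≤ q.toReal := by simpa using ENNReal.toReal_mono hq_top hq
  have hbound : ∀ᵐ x ∂μ, ‖‖f x‖ ^ q.toReal‖ ≤ lpNorm f ∞ μ ^ (q.toReal - 1) * ‖f x‖ := by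
    filter_upwards [ae_le_lpNorm_exponent_top htop] with x hx
    rw [Real.norm_of_nonneg (by positivity)]
    calc ‖f x‖ ^ q.toReal = ‖f x‖ ^ (q.toReal - 1) * ‖f x‖ ^ (1 : ℝ) := by
          rw [← Real.rpow_add' (norm_nonneg _) (by linarith), sub_add_cancel]
      _ ≤ lpNorm f ∞ μ ^ (q.toReal - 1) * ‖f x‖ := by
          rw [Real.rpow_one]; gcongr
  have hint : Integrable (fun x => ‖f x‖ ^ q.toReal) μ :=
    (hf.norm.const_mul _).mono' (hf.1.norm.aemeasurable.pow_const _).aestronglyMeasurable hbound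
  rwa [← memLp_norm_rpow_iff hf.1 hq0 hq_top, ENNReal.div_self hq0 hq_top,
    memLp_one_iff_integrable]

lemma tendsto_eLpNorm_zero_of_dominated {q : ℝ≥0∞} (hq0 : q ≠ 0) (hq_top : q ≠ ∞)
    {F : ℕ → α → E} {G : α → ℝ} (hF : ∀ n, AEStronglyMeasurable (F n) μ) (hG : MemLp G q μ)
    (hbound : ∀ n, ∀ᵐ x ∂μ, ‖F n x‖ ≤ G x)
    (hlim : ∀ᵐ x ∂μ, Tendsto (fun n => F n x) atTop (𝓝 0)) :
    Tendsto (fun n => eLpNorm (F n) q μ) atTop (𝓝 0) := by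
  have hq : 0 < q.toReal := ENNReal.toReal_pos hq0 hq_top
  simp_rw [eLpNorm_eq_lintegral_rpow_enorm_toReal hq0 hq_top]
  suffices Tendsto (fun n => ∫⁻ x, ‖F n x‖ₑ ^ q.toReal ∂μ) atTop (𝓝 0) by
    simpa [ENNReal.zero_rpow_of_pos (inv_pos.2 hq)] using this.ennrpow_const q.toReal⁻¹
  rw [← lintegral_zero]
  refine tendsto_lintegral_of_dominated_convergence' (fun x => ‖G x‖ₑ ^ q.toReal)
    (fun n => (hF n).enorm.pow_const _) (fun n => ?_)
    (lintegral_rpow_enorm_lt_top_of_eLpNorm_lt_top hq0 hq_top hG.2).ne ?_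
  · filter_upwards [hbound n] with x hx
    exact ENNReal.rpow_le_rpow (enorm_le_iff_norm_le.2 (hx.trans (Real.le_norm_self _))) hq.le
  · filter_upwards [hlim] with x hx
    simpa [ENNReal.zero_rpow_of_pos hq] using (hx.enorm).ennrpow_const q.toReal

lemma tendsto_integral_abs_mul_of_tendsto_eLpNorm {p q : ℝ≥0∞} [p.HolderConjugate q]
    {w d : ℕ → α → ℝ} (hw : ∀ n, AEStronglyMeasurable (w n) μ)
    (hd : ∀ n, AEStronglyMeasurable (d n) μ)
    (hw0 : Tendsto (fun n => eLpNorm (w n) p μ) atTop (𝓝 0))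
    {C : ℝ≥0∞} (hC : C ≠ ∞) (hdC : ∀ n, eLpNorm (d n) q μ ≤ C) :
    Tendsto (fun n => ∫ x, |w n x| * |d n x| ∂μ) atTop (𝓝 0) := by
  have hL1 : Tendsto (fun n => eLpNorm (fun x => w n x * d n x) 1 μ) atTop (𝓝 0) := by
    have hwC : Tendsto (fun n => eLpNorm (w n) p μ * C) atTop (𝓝 0) := by
      simpa using ENNReal.Tendsto.mul_const hw0 (Or.inr hC)
    refine tendsto_of_tendsto_of_tendsto_of_le_of_le tendsto_const_nhds hwC (fun _ => zero_le)
      fun n => ?_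
    calc eLpNorm (fun x => w n x * d n x) 1 μ
        ≤ eLpNorm (w n) p μ * eLpNorm (d n) q μ := by
          simpa using eLpNorm_le_eLpNorm_mul_eLpNorm_of_nnnorm (hw n) (hd n) (· * ·) 1
            (.of_forall fun x => by simp [nnnorm_mul])
      _ ≤ eLpNorm (w n) p μ * C := by gcongr; exact hdC n
  refine ((ENNReal.tendsto_toReal ENNReal.zero_ne_top).comp hL1).congr fun n => ?_
  rw [Function.comp_apply, eLpNorm_one_eq_lintegral_enorm,
    ← integral_norm_eq_lintegral_enorm (f := fun x => w n x * d n x) ((hw n).mul (hd n))]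
  simp only [Real.norm_eq_abs, abs_mul]

end Lp

theorem stmt_12_general (N : ℕ) (δ p : ℝ) (hp : 1 < p)
    (k : (Fin N → ℝ) → ℝ)
    (hk1 : Integrable k (volume : Measure (Fin N → ℝ)))
    (hkTop : MemLp k ⊤ (volume : Measure (Fin N → ℝ)))
    (g : ℝ × ℝ → ℝ) (hg : Continuous g)
    (hgsupp : ∀ u v : ℝ, δ ^ 2 ≤ u ^ 2 + v ^ 2 → g (u, v) = 0)
    (un vn : ℕ → (Fin N → ℝ) → ℝ) (u v : (Fin N → ℝ) → ℝ)
    (hmun : ∀ n, Measurable (un n)) (hmvn : ∀ n, Measurable (vn n))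
    (hmu : Measurable u) (hmv : Measurable v)
    (hu_ae : ∀ᵐ x ∂(volume : Measure (Fin N → ℝ)),
      Tendsto (fun n => un n x) atTop (nhds (u x)))
    (hv_ae : ∀ᵐ x ∂(volume : Measure (Fin N → ℝ)),
      Tendsto (fun n => vn n x) atTop (nhds (v x)))
    (hu_Lp : MemLp u (ENNReal.ofReal p) (volume : Measure (Fin N → ℝ)))
    (hbound : ∃ B : ENNReal, B < ⊤ ∧ ∀ n,
      eLpNorm (un n) (ENNReal.ofReal p) (volume : Measure (Fin N → ℝ)) ≤ B) :
    Tendsto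
      (fun n => ∫ x, |k x| * |g (un n x, vn n x) - g (u x, v x)| * |un n x - u x|)
      atTop (nhds 0) := by
  obtain ⟨B, hB_lt, hB⟩ := hbound
  obtain ⟨M, hM⟩ := (hasCompactSupport_of_le_sq_add_sq hgsupp).exists_bound_of_continuous hg
  set q := p.conjExponent
  have hqp : q.HolderConjugate p := (Real.HolderConjugate.conjExponent hp).symm
  have := hqp.ennrealOfReal
  have hkq : MemLp k (ENNReal.ofReal q) volume :=
    hk1.memLp_of_memLp_top hkTop (ENNReal.one_le_ofReal.2 hqp.lt.le)
  set w : ℕ → (Fin N → ℝ) → ℝ := fun n x => k x * (g (un n x, vn n x) - g (u x, v x))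
  have hw_meas : ∀ n, AEStronglyMeasurable (w n) volume := fun n =>
    hkq.1.mul (hg.measurable.comp ((hmun n).prodMk (hmvn n)) |>.sub
      (hg.measurable.comp (hmu.prodMk hmv))).aestronglyMeasurable
  have hw_dom : ∀ n, ∀ᵐ x, ‖w n x‖ ≤ 2 * M * ‖k x‖ := fun n => .of_forall fun x => by
    calc ‖w n x‖ ≤ ‖k x‖ * (M + M) := by
          rw [norm_mul]; gcongr; exact (norm_sub_le _ _).trans (add_le_add (hM _) (hM _))
      _ = 2 * M * ‖k x‖ := by ring
  have hw_lim : ∀ᵐ x, Tendsto (fun n => w n x) atTop (𝓝 0) := by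
    filter_upwards [hu_ae, hv_ae] with x hux hvx
    have hgx := (hg.tendsto (u x, v x)).comp (hux.prodMk_nhds hvx)
    simpa using (hgx.sub_const (g (u x, v x))).const_mul (k x)
  have hw0 := tendsto_eLpNorm_zero_of_dominated (by simpa using hqp.pos) ENNReal.ofReal_ne_top
    hw_meas (hkq.norm.const_mul (2 * M)) hw_dom hw_lim
  have hd_bound : ∀ n, eLpNorm (un n - u) (ENNReal.ofReal p) volume ≤
      B + eLpNorm u (ENNReal.ofReal p) volume := fun n =>
    (eLpNorm_sub_le (hmun n).aestronglyMeasurable hmu.aestronglyMeasurable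
      (ENNReal.one_le_ofReal.2 hp.le)).trans (add_le_add_left (hB n) _)
  simpa only [w, abs_mul, mul_assoc, Pi.sub_apply] using
    tendsto_integral_abs_mul_of_tendsto_eLpNorm hw_meas
    (fun n => ((hmun n).sub hmu).aestronglyMeasurable) hw0
    (ENNReal.add_ne_top.2 ⟨hB_lt.ne, hu_Lp.eLpNorm_ne_top⟩) hd_bound

/-- Lemma 3.5: convergence of the perturbation term. -/
theorem stmt_12 (N : ℕ) (hN : 1 ≤ N) (δ p : ℝ) (hδ : 0 < δ) (hp : 1 < p)
    (k : (Fin N → ℝ) → ℝ)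
    (hk1 : Integrable k (volume : Measure (Fin N → ℝ)))
    (hkTop : MemLp k ⊤ (volume : Measure (Fin N → ℝ)))
    (g : ℝ × ℝ → ℝ) (hg : Continuous g)
    (hgsupp : ∀ u v : ℝ, δ ^ 2 ≤ u ^ 2 + v ^ 2 → g (u, v) = 0)
    (un vn : ℕ → (Fin N → ℝ) → ℝ) (u v : (Fin N → ℝ) → ℝ)
    (hmun : ∀ n, Measurable (un n)) (hmvn : ∀ n, Measurable (vn n))
    (hmu : Measurable u) (hmv : Measurable v)
    (hu_ae : ∀ᵐ x ∂(volume : Measure (Fin N → ℝ)),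
      Tendsto (fun n => un n x) atTop (nhds (u x)))
    (hv_ae : ∀ᵐ x ∂(volume : Measure (Fin N → ℝ)),
      Tendsto (fun n => vn n x) atTop (nhds (v x)))
    (hu_Lp : MemLp u (ENNReal.ofReal p) (volume : Measure (Fin N → ℝ)))
    (hbound : ∃ B : ENNReal, B < ⊤ ∧ ∀ n,
      eLpNorm (un n) (ENNReal.ofReal p) (volume : Measure (Fin N → ℝ)) ≤ B) :
    Tendsto
      (fun n => ∫ x, |k x| * |g (un n x, vn n x) - g (u x, v x)| * |un n x - u x|)
      atTop (nhds 0) :=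
  stmt_12_general N δ p hp k hk1 hkTop g hg hgsupp un vn u v hmun hmvn hmu hmv hu_ae hv_ae hu_Lp
    hbound
end
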